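/- Let A : ℝ → Matrix (Fin n) (Fin n) ℂ be continuous and Y : ℝ → Matrix (Fin n) (Fin n) ℂ differentiable with Y'(x) = A(x)·Y(x) for all x. Then (det Y)'(x) = trace(A(x))·det Y(x), and consequently det Y(x) = det Y(x₀)·exp(∫_{x₀}^{x} trace(A(y)) dy). -/

import Mathlib

/-!
Expanding `det Y` over permutations and differentiating each product of entries gives Jacobi's
formula: `(det Y)'` is the sum over `i` of `det Y` with row `i` replaced by row `i` of `Y'`.
Row `i` of `A * Y` is `∑ k, A i k • Y k`, so by alternation that determinant is `A i i * det Y`,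
whence `(det Y)' = tr A * det Y`. Finally `f * exp (-∫ a)` has zero derivative whenever `f' = a f`.
-/

open Matrix intervalIntegral Finset

section Determinant

variable {R ι : Type*} [CommRing R] [Fintype ι] [DecidableEq ι]

theorem Matrix.det_eq_sum_perm_prod_row (M : Matrix ι ι R) :
    M.det = ∑ σ : Equiv.Perm ι, (Equiv.Perm.sign σ : R) * ∏ i, M i (σ i) := by
  rw [← det_transpose, det_apply']
  rfl

theorem Matrix.det_updateRow_eq_sum_perm (M : Matrix ι ι R) (i : ι) (c : ι → R) :
    (M.updateRow i c).det =
      ∑ σ : Equiv.Perm ι,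
        (Equiv.Perm.sign σ : R) * ((∏ j ∈ univ.erase i, M j (σ j)) * c (σ i)) := by
  rw [det_eq_sum_perm_prod_row]
  refine sum_congr rfl fun σ _ => ?_
  rw [← mul_prod_erase _ _ (mem_univ i), updateRow_self, mul_comm (c (σ i))]
  congr 2
  exact prod_congr rfl fun j hj => by rw [updateRow_ne (ne_of_mem_erase hj)]

theorem Matrix.sum_det_updateRow_mul (A Y : Matrix ι ι R) :
    ∑ i, (Y.updateRow i ((A * Y) i)).det = A.trace * Y.det := by
  have hrow : ∀ i, (A * Y) i = ∑ k, A i k • Y k := fun i => by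
    ext j
    simp [mul_apply]
  simp only [hrow, det_updateRow_sum, smul_eq_mul, trace, diag, sum_mul]

end Determinant

theorem Matrix.hasDerivAt_det {𝕜 R ι : Type*} [NontriviallyNormedField 𝕜] [NormedCommRing R]
    [NormedAlgebra 𝕜 R] [Fintype ι] [DecidableEq ι] {Y : 𝕜 → Matrix ι ι R} {Y' : Matrix ι ι R}
    {x : 𝕜} (hY : ∀ i j, HasDerivAt (fun x => Y x i j) (Y' i j) x) :
    HasDerivAt (fun x => (Y x).det) (∑ i, ((Y x).updateRow i (Y' i)).det) x := by
  simp only [det_eq_sum_perm_prod_row (Y _), det_updateRow_eq_sum_perm]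
  rw [sum_comm]
  refine HasDerivAt.fun_sum fun σ _ => ?_
  rw [← mul_sum]
  simpa only [smul_eq_mul] using
    (HasDerivAt.fun_finsetProd fun i _ => hY i (σ i)).const_mul (Equiv.Perm.sign σ : R)

theorem eq_mul_exp_integral_of_hasDerivAt {a f : ℝ → ℂ} (ha : Continuous a)
    (hf : ∀ x, HasDerivAt f (a x * f x) x) (x₀ x : ℝ) :
    f x = f x₀ * Complex.exp (∫ y in x₀..x, a y) := by
  set F : ℝ → ℂ := fun x => ∫ y in x₀..x, a y
  have hF : ∀ x, HasDerivAt F (a x) x := fun x => (ha.integral_hasStrictDerivAt x₀ x).hasDerivAt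
  have hg : ∀ x, HasDerivAt (fun x => f x * Complex.exp (-F x)) 0 x := fun x =>
    ((hf x).fun_mul (hF x).fun_neg.cexp).congr_deriv (by ring)
  have hconst : f x * Complex.exp (-F x) = f x₀ * Complex.exp (-F x₀) :=
    is_const_of_deriv_eq_zero (fun x => (hg x).differentiableAt) (fun x => (hg x).deriv) x x₀
  simp only [F, integral_same, neg_zero, Complex.exp_zero, mul_one] at hconst
  rw [← hconst, mul_assoc, ← Complex.exp_add, neg_add_cancel, Complex.exp_zero, mul_one]

theorem stmt_5 (n : ℕ) (A Y : ℝ → Matrix (Fin n) (Fin n) ℂ)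
    (hA : ∀ i j, Continuous fun x => A x i j)
    (hY : ∀ x i j, HasDerivAt (fun x' => Y x' i j) ((A x * Y x) i j) x) :
    (∀ x, HasDerivAt (fun x' => (Y x').det) ((A x).trace * (Y x).det) x) ∧
    (∀ x₀ x : ℝ, (Y x).det =
      (Y x₀).det * Complex.exp (∫ y in x₀..x, (A y).trace)) := by
  have hdet : ∀ x, HasDerivAt (fun x' => (Y x').det) ((A x).trace * (Y x).det) x := fun x => by
    simpa only [sum_det_updateRow_mul] using hasDerivAt_det (hY x)
  have htrace : Continuous fun x => (A x).trace :=
    (continuous_pi fun i => continuous_pi fun j => hA i j).matrix_trace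
  exact ⟨hdet, eq_mul_exp_integral_of_hasDerivAt htrace hdet⟩
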